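/- Let $m_1, m_2 > 2$ be integers, $m = m_1 + m_2$, and $x_0 = \frac{3m_1 + m_2 - 4}{4(m-2)}$. With $g$ and $h$ defined by $g(x) = \frac{(m_1-2)^2 - 2m_1^2}{2m^2 x^2} + \frac{m_1}{m x} + \frac{(m_1-2)\sqrt{(2mx - m_1)^2 - 4(m_1-1)}}{2m^2 x^2} + \frac{1}{m^2}\left(m - \frac{m_1}{x}\right)^2$ and $h(y) = \frac{(m_2-2)^2 - 2m_2^2}{2m^2 y^2} + \frac{m_2}{m y} + \frac{(m_2-2)\sqrt{(2my - m_2)^2 - 4(m_2-1)}}{2m^2 y^2} + \frac{1}{m^2}\left(m - \frac{m_2}{y}\right)^2$, one has $g(x_0) = h(1 - x_0) = \frac{(m-4)^2}{m^2}$. -/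

import Mathlib

/-- The upper-bound function for the squared mean curvature of the product,
coming from the factor `M₁^{m₁}` (the function `h` is `gBound m2 m1`). -/
noncomputable def gBound (m1 m2 : ℕ) (x : ℝ) : ℝ :=
  (((m1 : ℝ) - 2) ^ 2 - 2 * (m1 : ℝ) ^ 2) / (2 * ((m1 : ℝ) + m2) ^ 2 * x ^ 2) +
    (m1 : ℝ) / (((m1 : ℝ) + m2) * x) +
    ((m1 : ℝ) - 2) *
      Real.sqrt ((2 * ((m1 : ℝ) + m2) * x - (m1 : ℝ)) ^ 2 - 4 * ((m1 : ℝ) - 1)) /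
      (2 * ((m1 : ℝ) + m2) ^ 2 * x ^ 2) +
    (1 / ((m1 : ℝ) + m2) ^ 2) * (((m1 : ℝ) + m2) - (m1 : ℝ) / x) ^ 2

/-! At `x₀` the radicand in `g` is a perfect square, so `g(x₀)` is a rational function of `m₁, m₂`
and the claim becomes a polynomial identity. Since `1 - x₀` is `x₀` with `m₁, m₂` swapped, the
claim for `h` is the one for `g` with the roles of the factors exchanged. -/

/-- The paper's `x₀`, with `a = m₁` and `b = m₂`. -/
noncomputable def extremalRadiusSq (a b : ℝ) : ℝ :=
  (3 * a + b - 4) / (4 * (a + b - 2))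

lemma one_sub_extremalRadiusSq {a b : ℝ} (h : a + b - 2 ≠ 0) :
    1 - extremalRadiusSq a b = extremalRadiusSq b a := by
  have h' : b + a - 2 ≠ 0 := by rwa [add_comm]
  unfold extremalRadiusSq
  field_simp
  ring

lemma radicand_at_extremalRadiusSq {a b : ℝ} (h : a + b - 2 ≠ 0) :
    (2 * (a + b) * extremalRadiusSq a b - a) ^ 2 - 4 * (a - 1) =
      (((a + b - 4) ^ 2 + 4 * (b - 2)) / (2 * (a + b - 2))) ^ 2 := by
  unfold extremalRadiusSq
  field_simp
  ring

theorem gBound_extremalRadiusSq {m1 m2 : ℕ} (hm1 : 0 < m1) (hm2 : 2 ≤ m2) :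
    gBound m1 m2 (extremalRadiusSq m1 m2) =
      (((m1 : ℝ) + m2) - 4) ^ 2 / ((m1 : ℝ) + m2) ^ 2 := by
  have ha : (1 : ℝ) ≤ m1 := by exact_mod_cast hm1
  have hb : (2 : ℝ) ≤ m2 := by exact_mod_cast hm2
  have hd : (0 : ℝ) < (m1 : ℝ) + m2 - 2 := by linarith
  have hroot : 0 ≤ (((m1 : ℝ) + m2 - 4) ^ 2 + 4 * ((m2 : ℝ) - 2)) / (2 * ((m1 : ℝ) + m2 - 2)) := by
    positivity
  rw [gBound, radicand_at_extremalRadiusSq hd.ne', Real.sqrt_sq hroot, extremalRadiusSq]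
  have hx : (m1 : ℝ) * 3 + m2 - 4 ≠ 0 := by linarith
  have hm : (m1 : ℝ) + m2 ≠ 0 := by linarith
  field_simp
  ring

/-- At `x₀ = (3m₁ + m₂ - 4)/(4(m-2))` both bounds equal `(m-4)²/m²`. -/
theorem gBound_at_extremal_radius (m1 m2 : ℕ) (hm1 : 2 < m1) (hm2 : 2 < m2) :
    gBound m1 m2 ((3 * (m1 : ℝ) + m2 - 4) / (4 * ((m1 : ℝ) + m2 - 2))) =
        (((m1 : ℝ) + m2) - 4) ^ 2 / ((m1 : ℝ) + m2) ^ 2 ∧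
    gBound m2 m1 (1 - (3 * (m1 : ℝ) + m2 - 4) / (4 * ((m1 : ℝ) + m2 - 2))) =
        (((m1 : ℝ) + m2) - 4) ^ 2 / ((m1 : ℝ) + m2) ^ 2 := by
  have hm1' : (2 : ℝ) < m1 := by exact_mod_cast hm1
  have hsum : (m1 : ℝ) + m2 - 2 ≠ 0 := by linarith
  refine ⟨gBound_extremalRadiusSq (by omega) hm2.le, ?_⟩
  change gBound m2 m1 (1 - extremalRadiusSq m1 m2) = _
  rw [one_sub_extremalRadiusSq hsum, gBound_extremalRadiusSq (by omega) hm1.le, add_comm (m2 : ℝ)]
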